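/- arXiv:2408.07574 — 5 statements merged into one kernel-verified Lean document; each statement's English description precedes it below -/
import Mathlib

section
/- Let A be a nonassociative algebra over a field of characteristic 0 satisfying x²x = 0 and xx² = 0 for all x. Then for every element a of A, a²a² = 0. -/
/-- In a nonassociative algebra over a field of characteristic 0
satisfying x²x = 0 and xx² = 0, every element a satisfies a²a² = 0. -/
theorem stmt_2 {K A : Type*} [Field K] [CharZero K]
    [NonUnitalNonAssocRing A] [Module K A]
    [SMulCommClass K A A] [IsScalarTower K A A]
    (h1 : ∀ x : A, (x * x) * x = 0) (h2 : ∀ x : A, x * (x * x) = 0) :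
    ∀ a : A, (a * a) * (a * a) = 0 := by
  intro a
  set c := a * a with hc
  have hca : c * a = 0 := h1 a
  have hac : a * c = 0 := h2 a
  have hccc : (c * c) * c = 0 := h1 c
  have t1 := h1 (a + c)
  have t2 := h1 (a - c)
  simp only [mul_add, add_mul, ← hc, hca, hac, hccc, h1 a, zero_add, add_zero,
      zero_mul, mul_zero] at t1
  simp only [mul_sub, sub_mul, ← hc, hca, hac, hccc, h1 a, zero_add, add_zero,
      zero_sub, sub_zero, zero_mul, mul_zero, neg_mul, mul_neg, neg_neg, neg_zero] at t2
  -- t1 : c*c*a + c*c = 0, t2 : c*c*a - c*c = 0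
  have e1 : c * c * a = -(c * c) := eq_neg_of_add_eq_zero_left t1
  have e2 : c * c * a = c * c := sub_eq_zero.mp t2
  have hsum : c * c + c * c = 0 := by
    nth_rewrite 1 [← e2]
    rw [e1, neg_add_cancel]
  have h2cc : (2 : K) • (c * c) = 0 := by
    rw [two_smul]; exact hsum
  have := (smul_eq_zero.mp h2cc).resolve_left (by norm_num)
  simpa [hc] using this
end

section
/- There is no 3-dimensional commutative nonassociative ℂ-algebra A satisfying x²x = 0 for all x, containing an element a with a² ≠ 0, and having a basis {a, a², b} such that ba = a. -/
/-- There is no 3-dimensional commutative nonassociative ℂ-algebra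
with x²x = 0, an element a with a² ≠ 0, and a basis {a, a², b} with ba = a. -/
theorem stmt_5 {A : Type*} [NonUnitalNonAssocRing A] [Module ℂ A]
    [SMulCommClass ℂ A A] [IsScalarTower ℂ A A]
    (hcomm : ∀ x y : A, x * y = y * x)
    (hnil : ∀ x : A, (x * x) * x = 0)
    (a b : A) (ha : a * a ≠ 0)
    (hli : LinearIndependent ℂ ![a, a * a, b])
    (hsp : Submodule.span ℂ ({a, a * a, b} : Set A) = ⊤)
    (hba : b * a = a) : False := by
  -- Polarization of x²x = 0 : (y·y)x + 2(xy)y = 0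
  have aux : ∀ x y : A, (y*y)*x + (2:ℂ) • ((x*y)*y) = 0 := by
    intro x y
    have h1 := hnil (x + y)
    have h2 := hnil (x - y)
    simp only [add_mul, mul_add, sub_mul, mul_sub, hcomm y x, hnil] at h1 h2
    have h3 : (2:ℂ) • ((y*y)*x + (2:ℂ) • ((x*y)*y)) = 0 := by
      linear_combination (norm := module) h1 + h2
    have := smul_eq_zero.mp h3
    simpa using this
  have hab : a * b = a := (hcomm a b).trans hba
  -- a²b = -2 a²
  have key1 : (a*a)*b = (-2:ℂ) • (a*a) := by
    have := aux b a
    rw [hba] at this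
    linear_combination (norm := module) this
  -- b²a = -2 a
  have key2 : (b*b)*a = (-2:ℂ) • a := by
    have := aux a b
    rw [hab, hab] at this
    linear_combination (norm := module) this
  -- write b² in the basis
  have hmem : b * b ∈ Submodule.span ℂ ({a, a * a, b} : Set A) := by
    rw [hsp]; trivial
  rw [Submodule.mem_span_insert] at hmem
  obtain ⟨α, z, hz, hbb⟩ := hmem
  rw [Submodule.mem_span_insert] at hz
  obtain ⟨β, w, hw, hzeq⟩ := hz
  rw [Submodule.mem_span_singleton] at hw
  obtain ⟨γ, hwe⟩ := hw
  subst hwe hzeq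
  -- hbb : b*b = α•a + (β•(a*a) + γ•b)
  have hind := Fintype.linearIndependent_iff.mp hli
  -- multiply by a
  have e1 : α • (a*a) + (γ + 2) • a = 0 := by
    have : (b*b)*a = α • (a*a) + (β • ((a*a)*a) + γ • (b*a)) := by
      rw [hbb]; simp [add_mul, smul_mul_assoc]
    rw [hnil a, hba, key2] at this
    linear_combination (norm := module) -this
  have hcoef1 : ∀ i, ![(γ + 2 : ℂ), α, 0] i = 0 := by
    apply hind
    simp [Fin.sum_univ_three]
    linear_combination (norm := module) e1
  have hα : α = 0 := by simpa using hcoef1 1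
  have hγ : γ = -2 := by have h := hcoef1 0; simp only [Matrix.cons_val_zero] at h; linear_combination h
  subst hα hγ
  -- multiply b² by b
  have e2 : (-4*β) • (a*a) + (4:ℂ) • b = 0 := by
    have h0 : (b*b)*b = (0:ℂ) • (a*b) + (β • ((a*a)*b) + (-2:ℂ) • (b*b)) := by
      conv_lhs => rw [hbb]
      simp [add_mul, smul_mul_assoc]
    rw [hnil b, hab, key1, hbb] at h0
    linear_combination (norm := module) -h0
  have hcoef2 := hind ![0, -4*β, 4] ?_
  · simpa using hcoef2 2
  · simp [Fin.sum_univ_three]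
    linear_combination (norm := module) e2
end

section
/- Let A be a 3-dimensional commutative nonassociative ℂ-algebra satisfying x²x = 0 for all x, containing an element a with a² ≠ 0, with basis {a, a², b} satisfying ba = b and b² = 0. Then setting x = a² + b gives x² = -4b and x²x = 8b, contradicting x²x = 0 unless b = 0; hence no such algebra exists. -/
/-- There is no 3-dimensional commutative nonassociative ℂ-algebra
with x²x = 0, basis {a, a², b} (a² ≠ 0), ba = b and b² = 0. -/
theorem stmt_6 {A : Type*} [NonUnitalNonAssocRing A] [Module ℂ A]
    [SMulCommClass ℂ A A] [IsScalarTower ℂ A A]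
    (hcomm : ∀ x y : A, x * y = y * x)
    (hnil : ∀ x : A, (x * x) * x = 0)
    (a b : A) (ha : a * a ≠ 0)
    (hli : LinearIndependent ℂ ![a, a * a, b])
    (hsp : Submodule.span ℂ ({a, a * a, b} : Set A) = ⊤)
    (hba : b * a = b) (hb2 : b * b = 0) : False := by
  -- full linearization of x²x = 0
  have h1 : ∀ x y : A, (x*x)*y + (x*y)*x + (y*x)*x + ((x*y)*y + (y*x)*y + (y*y)*x) = 0 := by
    intro x y
    have h := hnil (x + y)
    simp only [mul_add, add_mul, hnil] at h
    rw [← h]; abel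
  -- degree-2 part of the linearization
  have h2 : ∀ x y : A, (x*y)*y + (y*x)*y + (y*y)*x = 0 := by
    intro x y
    have hp := h1 x y
    have hm := h1 x (-y)
    simp only [mul_neg, neg_mul, neg_neg] at hm
    have key : ((x*y)*y + (y*x)*y + (y*y)*x) + ((x*y)*y + (y*x)*y + (y*y)*x) = 0 := by
      have h3 : ((x*x)*y + (x*y)*x + (y*x)*x + ((x*y)*y + (y*x)*y + (y*y)*x))
          + (-((x*x)*y) + -((x*y)*x) + -((y*x)*x) + ((x*y)*y + (y*x)*y + (y*y)*x)) = 0 := by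
        rw [hp, hm, add_zero]
      rw [← h3]; abel
    have key2 : (2:ℂ) • ((x*y)*y + (y*x)*y + (y*y)*x) = 0 := by
      rw [two_smul]; exact key
    rcases smul_eq_zero.mp key2 with h | h
    · norm_num at h
    · exact h
  -- a²b = -2b
  have hab : (a*a)*b = -(b + b) := by
    have h := h2 b a
    rw [hcomm a b, hba] at h
    rw [hba] at h
    exact eq_neg_of_add_eq_zero_left (by rw [← h]; abel)
  -- (a²)² = 0
  have h4 : (a*a)*(a*a) = 0 := by
    have h := h2 (a*a) a
    rw [hnil a, hcomm a (a*a), hnil a, zero_mul, zero_add, zero_add] at h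
    exact h
  -- x := a² + b
  have hx2 : (a*a + b) * (a*a + b) = -(b+b) + -(b+b) := by
    rw [mul_add, add_mul, add_mul, h4, hb2, hcomm b (a*a), hab]
    abel
  have hx3 := hnil (a*a + b)
  rw [hx2] at hx3
  simp only [add_mul, mul_add, neg_mul, hb2, hcomm b (a*a), hab] at hx3
  have h8 : (8:ℤ) • b = 0 := by rw [← hx3]; abel
  have h8' : (8:ℂ) • b = 0 := by
    rw [show (8:ℂ) = ((8:ℤ):ℂ) by norm_num, Int.cast_smul_eq_zsmul]; exact h8
  have hb0 : b = 0 := by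
    rcases smul_eq_zero.mp h8' with h | h
    · norm_num at h
    · exact h
  have := hli.ne_zero 2
  simp [hb0] at this
end

section
/- The 3-dimensional ℂ-algebra C_{0,a²} with basis {e₁, e₂, e₃} and nonzero products e₁e₁ = e₂ and e₃e₃ = e₂ satisfies x²x = 0 and xx² = 0 for all x, and its annihilator has dimension 1. Consequently C_{0,a²} is not isomorphic to the algebra C_{0,0} (whose annihilator has dimension 2). -/
/-- Multiplication of the algebra C_{0,a²}: nonzero products e₁e₁ = e₂, e₃e₃ = e₂. -/
def mulC0a2 (v w : Fin 3 → ℂ) : Fin 3 → ℂ := ![0, v 0 * w 0 + v 2 * w 2, 0]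

/-- Multiplication of the algebra C_{0,0}: sole nonzero product e₁e₁ = e₂. -/
def mulC00 (v w : Fin 3 → ℂ) : Fin 3 → ℂ := ![0, v 0 * w 0, 0]

/-- C_{0,a²} satisfies x²x = 0 and xx² = 0, its annihilator has
dimension 1, and consequently C_{0,a²} is not isomorphic to C_{0,0}. -/
theorem stmt_9 :
    (∀ x : Fin 3 → ℂ, mulC0a2 (mulC0a2 x x) x = 0 ∧ mulC0a2 x (mulC0a2 x x) = 0) ∧
    (∃ S : Submodule ℂ (Fin 3 → ℂ),
      (∀ z, z ∈ S ↔ ∀ x, mulC0a2 z x = 0 ∧ mulC0a2 x z = 0) ∧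
      Module.finrank ℂ S = 1) ∧
    ¬ ∃ f : (Fin 3 → ℂ) ≃ₗ[ℂ] (Fin 3 → ℂ),
        ∀ x y, f (mulC0a2 x y) = mulC00 (f x) (f y) := by
  refine ⟨?_, ?_, ?_⟩
  · intro x
    constructor <;> (ext i; fin_cases i <;> simp [mulC0a2])
  · refine ⟨Submodule.span ℂ {![0,1,0]}, ?_, ?_⟩
    · intro z
      rw [Submodule.mem_span_singleton]
      constructor
      · rintro ⟨c, rfl⟩ x
        constructor <;> (ext i; fin_cases i <;> simp [mulC0a2])
      · intro h
        refine ⟨z 1, ?_⟩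
        have h1 := congrFun (h ![1,0,0]).1 1
        have h2 := congrFun (h ![0,0,1]).1 1
        simp [mulC0a2] at h1 h2
        ext i; fin_cases i <;> simp [h1, h2]
    · rw [finrank_span_singleton (by
        intro h
        simpa using congrFun h 1)]
  · rintro ⟨f, hf⟩
    set u : Fin 3 → ℂ := ![1,0,Complex.I] with hu
    set v : Fin 3 → ℂ := ![1,0,-Complex.I] with hv
    have hu2 : mulC0a2 u u = 0 := by
      ext i; fin_cases i <;> simp [mulC0a2, hu, Complex.I_mul_I]
    have hv2 : mulC0a2 v v = 0 := by
      ext i; fin_cases i <;> simp [mulC0a2, hv, Complex.I_mul_I]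
    have hfu : f u 0 = 0 := by
      have := hf u u
      rw [hu2, map_zero] at this
      have h1 := congrFun this.symm 1
      simp [mulC00, mul_self_eq_zero] at h1
      exact h1
    have hfv : f v 0 = 0 := by
      have := hf v v
      rw [hv2, map_zero] at this
      have h1 := congrFun this.symm 1
      simp [mulC00, mul_self_eq_zero] at h1
      exact h1
    have hsum : mulC0a2 (u + v) (u + v) = ![0, 4, 0] := by
      ext i; fin_cases i <;>
        simp [mulC0a2, hu, hv, Complex.I_mul_I] <;> ring
    have key : f ![0, (4:ℂ), 0] = 0 := by
      rw [← hsum, hf]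
      ext i; fin_cases i <;> simp [mulC00, hfu, hfv]
    have : (![0, (4:ℂ), 0] : Fin 3 → ℂ) = 0 := by
      exact f.injective (key.trans (map_zero f).symm)
    simpa using congrFun this 1
end

section
/- Any 2-dimensional nilalgebra over ℂ is commutative or anticommutative. More precisely: if A is a 2-dimensional ℂ-algebra in which every element x satisfies xᵏ = 0 for all bracketings of sufficiently large k (in particular x²x = xx² = 0 whenever x² ∈ span{x} forces triviality), then either xy = yx for all x,y or xy = -yx for all x,y. -/
/-!
If every square vanishes, polarising `(x + y) * (x + y) = 0` gives anticommutativity. Otherwise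
pick `x` with `x * x ≠ 0`. Nilness forbids `x * x ∈ K ∙ x`, so `x, x * x` is a basis, i.e. `x` is
a cyclic vector for left and for right multiplication by `x`. Since those operators kill `x`
eventually, they are nilpotent, hence square to zero in dimension 2:
`x * (x * x) = 0 = (x * x) * x`. So the basis vectors commute, and the algebra is commutative.
-/

/-- `IsPow a x n` : x is a product of exactly n copies of a, in some bracketing. -/
inductive IsPow {A : Type*} [Mul A] (a : A) : A → ℕ → Prop
  | base : IsPow a a 1
  | mul {x y : A} {m n : ℕ} : IsPow a x m → IsPow a y n → IsPow a (x * y) (m + n)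

open Module Submodule LinearMap

def IsNilElement {A : Type*} [Mul A] [Zero A] (x : A) : Prop :=
  ∃ n : ℕ, ∀ k : ℕ, n ≤ k → ∀ z : A, IsPow x z k → z = 0

theorem Module.End.pow_eq_zero_of_span_pair_eq_top {R M : Type*} [CommSemiring R]
    [AddCommMonoid M] [Module R M] {f : Module.End R M} {v : M} (hv : span R {v, f v} = ⊤)
    {n : ℕ} (hn : (f ^ n) v = 0) : f ^ n = 0 := by
  refine ext_on hv ?_
  rintro w (rfl | rfl)
  · simpa using hn
  · rw [LinearMap.zero_apply, ← Module.End.mul_apply, ← pow_succ, pow_succ', Module.End.mul_apply,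
      hn, map_zero]

theorem Module.End.pow_finrank_eq_zero_of_pow_eq_zero {K V : Type*} [Field K] [AddCommGroup V]
    [Module K V] [FiniteDimensional K V] {f : Module.End K V} {n : ℕ} (hf : f ^ n = 0) :
    f ^ finrank K V = 0 := by
  have := f.ker_pow_le_ker_pow_finrank n
  rwa [hf, ker_zero, top_le_iff, ker_eq_top] at this

theorem mul_eq_neg_mul_of_mul_self_eq_zero {A : Type*} [NonUnitalNonAssocRing A]
    (h : ∀ a : A, a * a = 0) (x y : A) : x * y = -(y * x) := by
  have hxy := h (x + y)
  rw [add_mul, mul_add, mul_add, h x, h y, zero_add, add_zero] at hxy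
  exact eq_neg_of_add_eq_zero_left hxy

section Semiring

variable {R A : Type*} [CommSemiring R] [NonUnitalNonAssocSemiring A] [Module R A]
  [SMulCommClass R A A] [IsScalarTower R A A]

theorem mul_comm_of_span_pair_eq_top {a b : A} (hspan : span R {a, b} = ⊤) (hab : a * b = b * a)
    (u v : A) : u * v = v * u := by
  have hflip : mul R A = (mul R A).flip := by
    refine ext_on hspan fun c hc => ext_on hspan fun d hd => ?_
    rcases hc with rfl | rfl <;> rcases hd with rfl | rfl <;> simp [hab]
  exact congr($hflip u v)

theorem isPow_mul_pow_apply (x : A) (k : ℕ) : IsPow x ((mul R A x ^ k) x) (k + 1) := by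
  induction k with
  | zero => simpa using IsPow.base
  | succ k ih =>
    rw [pow_succ', Module.End.mul_apply, mul_apply', add_comm]
    exact IsPow.base.mul ih

theorem isPow_flip_mul_pow_apply (x : A) (k : ℕ) :
    IsPow x (((mul R A).flip x ^ k) x) (k + 1) := by
  induction k with
  | zero => simpa using IsPow.base
  | succ k ih =>
    rw [pow_succ', Module.End.mul_apply, flip_apply, mul_apply']
    exact ih.mul IsPow.base

end Semiring

namespace IsNilElement

variable {K A : Type*} [Field K] [NonUnitalNonAssocRing A] [Module K A]
  [SMulCommClass K A A] [IsScalarTower K A A]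

variable {x : A}

theorem mul_self_eq_zero_of_mul_self_eq_smul (hx : IsNilElement x) {c : K}
    (hc : x * x = c • x) : x * x = 0 := by
  obtain ⟨n, hn⟩ := hx
  have hpow : ∀ k, (mul K A x ^ k) x = c ^ k • x := by
    intro k
    induction k with
    | zero => simp
    | succ k ih => rw [pow_succ', Module.End.mul_apply, ih, map_smul, mul_apply', hc, smul_smul,
        pow_succ]
  have h0 := hn (n + 1) (by omega) _ (isPow_mul_pow_apply (R := K) x n)
  rcases smul_eq_zero.mp (hpow n ▸ h0) with h | h
  · rw [hc, eq_zero_of_pow_eq_zero h, zero_smul]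
  · rw [h, zero_mul]

theorem span_pair_mul_self_eq_top (hA : finrank K A = 2) (hx : IsNilElement x)
    (hxx : x * x ≠ 0) : span K {x, x * x} = ⊤ := by
  have hx0 : x ≠ 0 := by
    rintro rfl
    exact hxx (zero_mul 0)
  have hli : LinearIndependent K ![x, x * x] := (LinearIndependent.pair_iff' hx0).mpr
    fun c hc => hxx (hx.mul_self_eq_zero_of_mul_self_eq_smul hc.symm)
  simpa [Matrix.range_cons, Matrix.range_empty, Set.union_singleton, Set.pair_comm] using
    hli.span_eq_top_of_card_eq_finrank (by simp [hA])

theorem sq_apply_eq_zero (hA : finrank K A = 2) (hx : IsNilElement x) {f : Module.End K A}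
    (hfx : f x = x * x) (hpow : ∀ k, IsPow x ((f ^ k) x) (k + 1)) : (f ^ 2) x = 0 := by
  by_cases hxx : x * x = 0
  · rw [sq, Module.End.mul_apply, hfx, hxx, map_zero]
  have : FiniteDimensional K A := .of_finrank_eq_succ hA
  obtain ⟨n, hn⟩ := hx
  have hspan : span K {x, f x} = ⊤ := hfx ▸ span_pair_mul_self_eq_top hA ⟨n, hn⟩ hxx
  have hfn := Module.End.pow_eq_zero_of_span_pair_eq_top hspan (hn _ (by omega) _ (hpow n))
  rw [← hA, Module.End.pow_finrank_eq_zero_of_pow_eq_zero hfn, LinearMap.zero_apply]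

theorem mul_mul_self_eq_zero (hA : finrank K A = 2) (hx : IsNilElement x) : x * (x * x) = 0 := by
  simpa [sq] using hx.sq_apply_eq_zero hA (mul_apply' x x) (isPow_mul_pow_apply x)

theorem mul_self_mul_eq_zero (hA : finrank K A = 2) (hx : IsNilElement x) : x * x * x = 0 := by
  simpa [sq] using hx.sq_apply_eq_zero hA (f := (mul K A).flip x) (by simp)
    (isPow_flip_mul_pow_apply x)

end IsNilElement

/-- Any 2-dimensional nilalgebra over ℂ is commutative or
anticommutative. -/
theorem stmt_18 {A : Type*} [NonUnitalNonAssocRing A] [Module ℂ A]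
    [SMulCommClass ℂ A A] [IsScalarTower ℂ A A]
    (hdim : Module.finrank ℂ A = 2)
    (hnil : ∀ x : A, ∃ n : ℕ, ∀ (k : ℕ), n ≤ k → ∀ z : A, IsPow x z k → z = 0) :
    (∀ x y : A, x * y = y * x) ∨ (∀ x y : A, x * y = -(y * x)) := by
  by_cases hsq : ∀ a : A, a * a = 0
  · exact .inr (mul_eq_neg_mul_of_mul_self_eq_zero hsq)
  obtain ⟨x, hxx⟩ := not_forall.mp hsq
  have hx : IsNilElement x := hnil x
  refine .inl (mul_comm_of_span_pair_eq_top (hx.span_pair_mul_self_eq_top hdim hxx) ?_)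
  rw [hx.mul_mul_self_eq_zero hdim, hx.mul_self_mul_eq_zero hdim]
end
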